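/- With the notation of the previous statement (λ ⊢ n, σ ∈ S_n, d_λ(i) = Σ_{T ∈ STab(λ)} deg_i(in(f_T))), the inequality d_λ(σ(i)) < d_λ(σ(i+1)) holds if and only if there exists a standard tableau T of shape λ (w.r.t. the order σ(1) ≺ ⋯ ≺ σ(n)) in which σ(i) and σ(i+1) lie in the same column. -/

import Mathlib

/-- `(i, j)` (row `i`, column `j`, both 1-indexed) is a box of the Young diagram of `lam`. -/
def IsCell (lam : ℕ → ℕ) (p : ℕ × ℕ) : Prop :=
  1 ≤ p.1 ∧ 1 ≤ p.2 ∧ p.2 ≤ lam p.1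

/-- `T` is a bijective filling of the Young diagram of `lam` by `{1, …, n}`. -/
def IsFilling (n : ℕ) (lam : ℕ → ℕ) (T : ℕ × ℕ → ℕ) : Prop :=
  (∀ p, IsCell lam p → T p ∈ Finset.Icc 1 n) ∧
  (∀ p q, IsCell lam p → IsCell lam q → T p = T q → p = q) ∧
  (∀ v ∈ Finset.Icc 1 n, ∃ p, IsCell lam p ∧ T p = v)

/-- Rows of `T` increase left to right in the order `σ(1) ≺ σ(2) ≺ ⋯`. -/
def RowStd (σ : Equiv.Perm ℕ) (lam : ℕ → ℕ) (T : ℕ × ℕ → ℕ) : Prop :=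
  ∀ i j, 1 ≤ j → IsCell lam (i, j + 1) → σ.symm (T (i, j)) < σ.symm (T (i, j + 1))

/-- Columns of `T` increase top to bottom in the order `σ(1) ≺ σ(2) ≺ ⋯`. -/
def ColStd (σ : Equiv.Perm ℕ) (lam : ℕ → ℕ) (T : ℕ × ℕ → ℕ) : Prop :=
  ∀ i j, 1 ≤ i → IsCell lam (i + 1, j) → σ.symm (T (i, j)) < σ.symm (T (i + 1, j))

/-- `T` is a standard tableau of shape `lam` w.r.t. the order `σ(1) ≺ ⋯ ≺ σ(n)`. -/
def IsStd (σ : Equiv.Perm ℕ) (n : ℕ) (lam : ℕ → ℕ) (T : ℕ × ℕ → ℕ) : Prop :=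
  IsFilling n lam T ∧ RowStd σ lam T ∧ ColStd σ lam T

/-- `d_λ(v) = Σ_{T ∈ STab(λ)} deg_v(in(f_T))`, where `deg_v(in(f_T))` is
(row of `v` in `T`) − 1; tableaux are normalized to vanish off the diagram. -/
noncomputable def dlam (n : ℕ) (σ : Equiv.Perm ℕ) (lam : ℕ → ℕ) (v : ℕ) : ℕ :=
  ∑ᶠ T ∈ {T : ℕ × ℕ → ℕ | IsStd σ n lam T ∧ ∀ p, ¬ IsCell lam p → T p = 0},
    (sSup {i | ∃ c, IsCell lam (i, c) ∧ T (i, c) = v} - 1)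


/-!
Put `a = σ i` and `b = σ (i + 1)`, which are adjacent in `≺`. If `a` and `b` share neither a row
nor a column of a standard tableau `T`, exchanging them yields another standard tableau; doing
this exactly for such `T` is an involution `T ↦ T*` on standard tableaux. The degree of `a` in
`T` equals that of `b` in `T*`, except when `a` and `b` share a column of `T`: then `T* = T` and
column-strictness puts `a` in a strictly higher row than `b`. Summing over `T` gives
`d_λ(a) ≤ d_λ(b)`, with equality iff no standard tableau has `a` and `b` in one column.
-/

open Finset

section Tableaux

variable {n : ℕ} {lam : ℕ → ℕ} {σ : Equiv.Perm ℕ} {T T' : ℕ × ℕ → ℕ}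

def RowLengthsAntitone (lam : ℕ → ℕ) : Prop :=
  ∀ a b, 1 ≤ a → a ≤ b → lam b ≤ lam a

lemma IsCell.of_row_le (hanti : RowLengthsAntitone lam) {r r' c : ℕ}
    (h : IsCell lam (r', c)) (hr : 1 ≤ r) (hrr : r ≤ r') : IsCell lam (r, c) :=
  ⟨hr, h.2.1, h.2.2.trans (hanti r r' hr hrr)⟩

lemma IsCell.of_succ_col {r c : ℕ} (h : IsCell lam (r, c + 1)) (hc : 1 ≤ c) :
    IsCell lam (r, c) :=
  ⟨h.1, hc, (Nat.le_succ c).trans h.2.2⟩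

lemma ColStd.lt_of_row_lt (hcol : ColStd σ lam T) (hanti : RowLengthsAntitone lam)
    {r r' c : ℕ} (hr : 1 ≤ r) (hrr : r < r') (h : IsCell lam (r', c)) :
    σ.symm (T (r, c)) < σ.symm (T (r', c)) := by
  induction r', hrr using Nat.le_induction with
  | base => exact hcol r c hr h
  | succ k _ ih =>
    exact (ih (h.of_row_le hanti (by omega) k.le_succ)).trans (hcol k c (by omega) h)

lemma IsFilling.finite_cells (hT : IsFilling n lam T) : {p | IsCell lam p}.Finite :=
  Set.Finite.of_finite_image
    ((Icc 1 n).finite_toSet.subset (by rintro _ ⟨p, hp, rfl⟩; exact hT.1 p hp))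
    (fun p hp q hq h => hT.2.1 p q hp hq h)

/-- `deg_v(in f_T)`: the row of `v` in `T`, minus one. -/
noncomputable def inDeg (lam : ℕ → ℕ) (T : ℕ × ℕ → ℕ) (v : ℕ) : ℕ :=
  sSup {i | ∃ c, IsCell lam (i, c) ∧ T (i, c) = v} - 1

def stdTableaux (σ : Equiv.Perm ℕ) (n : ℕ) (lam : ℕ → ℕ) : Set (ℕ × ℕ → ℕ) :=
  {T | IsStd σ n lam T ∧ ∀ p, ¬ IsCell lam p → T p = 0}

def SameRow (lam : ℕ → ℕ) (T : ℕ × ℕ → ℕ) (a b : ℕ) : Prop :=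
  ∃ r c c', IsCell lam (r, c) ∧ IsCell lam (r, c') ∧ T (r, c) = a ∧ T (r, c') = b

def SameColumn (lam : ℕ → ℕ) (T : ℕ × ℕ → ℕ) (a b : ℕ) : Prop :=
  ∃ r r' c, IsCell lam (r, c) ∧ IsCell lam (r', c) ∧ T (r, c) = a ∧ T (r', c) = b

lemma IsFilling.inDeg_apply (hT : IsFilling n lam T) {p : ℕ × ℕ} (hp : IsCell lam p) :
    inDeg lam T (T p) = p.1 - 1 := by
  have : {i | ∃ c, IsCell lam (i, c) ∧ T (i, c) = T p} = {p.1} := by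
    ext r
    refine ⟨fun ⟨c, hc, he⟩ => congrArg Prod.fst (hT.2.1 _ p hc hp he), ?_⟩
    rintro rfl
    exact ⟨p.2, hp, rfl⟩
  rw [inDeg, this, csSup_singleton]

lemma inDeg_perm_comp (e : Equiv.Perm ℕ) (v : ℕ) :
    inDeg lam (fun p => e (T p)) (e v) = inDeg lam T v := by
  simp only [inDeg, e.apply_eq_iff_eq]

-- A filling embeds the diagram into `Icc 1 n`, so the diagram is finite once a tableau exists.
lemma stdTableaux_finite (σ : Equiv.Perm ℕ) (n : ℕ) (lam : ℕ → ℕ) :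
    (stdTableaux σ n lam).Finite := by
  rcases (stdTableaux σ n lam).eq_empty_or_nonempty with h | ⟨T₀, hT₀, -⟩
  · simp [h]
  have : Finite {p // IsCell lam p} := hT₀.1.finite_cells.to_subtype
  refine Set.Finite.of_finite_image (f := fun T (p : {p // IsCell lam p}) => T p)
    ((Set.Finite.pi fun _ => (Icc 1 n).finite_toSet).subset ?_) ?_
  · rintro _ ⟨T, hT, rfl⟩ p -
    exact hT.1.1.1 p p.2
  · intro T hT T' hT' h
    funext p
    by_cases hp : IsCell lam p
    · exact congrFun h ⟨p, hp⟩
    · rw [hT.2 p hp, hT'.2 p hp]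

lemma dlam_eq_sum (v : ℕ) :
    dlam n σ lam v = ∑ T ∈ (stdTableaux_finite σ n lam).toFinset, inDeg lam T v :=
  finsum_mem_eq_finite_toFinset_sum _ (stdTableaux_finite σ n lam)

lemma SameRow.symm {a b : ℕ} (h : SameRow lam T a b) : SameRow lam T b a :=
  let ⟨r, c, c', hc, hc', ha, hb⟩ := h
  ⟨r, c', c, hc', hc, hb, ha⟩

lemma SameColumn.symm {a b : ℕ} (h : SameColumn lam T a b) : SameColumn lam T b a :=
  let ⟨r, r', c, hr, hr', ha, hb⟩ := h
  ⟨r', r, c, hr', hr, hb, ha⟩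

lemma sameRow_swap_comp (a b : ℕ) :
    SameRow lam (fun p => Equiv.swap a b (T p)) a b ↔ SameRow lam T a b := by
  simp only [SameRow, Equiv.swap_apply_eq_iff, Equiv.swap_apply_left, Equiv.swap_apply_right]
  exact ⟨SameRow.symm, SameRow.symm⟩

lemma sameColumn_swap_comp (a b : ℕ) :
    SameColumn lam (fun p => Equiv.swap a b (T p)) a b ↔ SameColumn lam T a b := by
  simp only [SameColumn, Equiv.swap_apply_eq_iff, Equiv.swap_apply_left, Equiv.swap_apply_right]
  exact ⟨SameColumn.symm, SameColumn.symm⟩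

lemma swap_succ_lt_swap_succ {i x y : ℕ} (h : x < y) (hne : ¬(x = i ∧ y = i + 1)) :
    Equiv.swap i (i + 1) x < Equiv.swap i (i + 1) y := by
  simp only [Equiv.swap_apply_def]
  split_ifs <;> omega

lemma symm_swap_lt_symm_swap {i u v : ℕ} (h : σ.symm u < σ.symm v)
    (hne : ¬(u = σ i ∧ v = σ (i + 1))) :
    σ.symm (Equiv.swap (σ i) (σ (i + 1)) u) < σ.symm (Equiv.swap (σ i) (σ (i + 1)) v) := by
  have hconj : ∀ w,
      σ.symm (Equiv.swap (σ i) (σ (i + 1)) w) = Equiv.swap i (i + 1) (σ.symm w) := by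
    intro w
    rw [Equiv.swap_apply_apply]
    simp
  rw [hconj, hconj]
  refine swap_succ_lt_swap_succ h fun ⟨hu, hv⟩ => hne ⟨?_, ?_⟩
  · exact σ.symm_apply_eq.mp hu
  · exact σ.symm_apply_eq.mp hv

lemma swap_apply_mem_iff {s : Set ℕ} {a b v : ℕ} (ha : a ∈ s) (hb : b ∈ s) :
    Equiv.swap a b v ∈ s ↔ v ∈ s := by
  rw [Equiv.swap_apply_def]
  split_ifs <;> simp_all

lemma IsFilling.perm_comp (hT : IsFilling n lam T) (e : Equiv.Perm ℕ)
    (he : ∀ v, e v ∈ Icc 1 n ↔ v ∈ Icc 1 n) : IsFilling n lam (fun p => e (T p)) := by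
  refine ⟨fun p hp => (he _).2 (hT.1 p hp), fun p q hp hq h => hT.2.1 p q hp hq (e.injective h),
    fun v hv => ?_⟩
  obtain ⟨p, hp, hpv⟩ := hT.2.2 (e.symm v) ((he _).1 (by simpa using hv))
  exact ⟨p, hp, by simp [hpv]⟩

lemma RowStd.swap_comp {i : ℕ} (hrow : RowStd σ lam T)
    (h : ¬ SameRow lam T (σ i) (σ (i + 1))) :
    RowStd σ lam (fun p => Equiv.swap (σ i) (σ (i + 1)) (T p)) := fun r j hj hc =>
  symm_swap_lt_symm_swap (hrow r j hj hc) fun ⟨ha, hb⟩ =>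
    h ⟨r, j, j + 1, hc.of_succ_col hj, hc, ha, hb⟩

lemma ColStd.swap_comp (hanti : RowLengthsAntitone lam) {i : ℕ}
    (hcol : ColStd σ lam T) (h : ¬ SameColumn lam T (σ i) (σ (i + 1))) :
    ColStd σ lam (fun p => Equiv.swap (σ i) (σ (i + 1)) (T p)) := fun r j hr hc =>
  symm_swap_lt_symm_swap (hcol r j hr hc) fun ⟨ha, hb⟩ =>
    h ⟨r, r + 1, j, hc.of_row_le hanti hr r.le_succ, hc, ha, hb⟩

open Classical in
noncomputable def swapPartner (lam : ℕ → ℕ) (a b : ℕ) (T : ℕ × ℕ → ℕ) :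
    ℕ × ℕ → ℕ :=
  if SameRow lam T a b ∨ SameColumn lam T a b then T else fun p => Equiv.swap a b (T p)

lemma swapPartner_of_sameColumn {a b : ℕ} (h : SameColumn lam T a b) :
    swapPartner lam a b T = T :=
  if_pos (Or.inr h)

lemma swapPartner_swapPartner (a b : ℕ) (T : ℕ × ℕ → ℕ) :
    swapPartner lam a b (swapPartner lam a b T) = T := by
  by_cases h : SameRow lam T a b ∨ SameColumn lam T a b
  · rw [show swapPartner lam a b T = T from if_pos h]
    exact if_pos h
  · have h' : ¬ (SameRow lam (fun p => Equiv.swap a b (T p)) a b ∨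
        SameColumn lam (fun p => Equiv.swap a b (T p)) a b) := by
      rwa [sameRow_swap_comp, sameColumn_swap_comp]
    rw [show swapPartner lam a b T = _ from if_neg h, swapPartner, if_neg h']
    simp only [Equiv.swap_apply_self]

lemma swapPartner_mem_stdTableaux (hanti : RowLengthsAntitone lam) {i : ℕ}
    (ha : σ i ∈ Icc 1 n) (hb : σ (i + 1) ∈ Icc 1 n) (hT : T ∈ stdTableaux σ n lam) :
    swapPartner lam (σ i) (σ (i + 1)) T ∈ stdTableaux σ n lam := by
  obtain ⟨⟨hfill, hrow, hcol⟩, hzero⟩ := hT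
  unfold swapPartner
  split_ifs with h
  · exact ⟨⟨hfill, hrow, hcol⟩, hzero⟩
  push Not at h
  refine ⟨⟨hfill.perm_comp _ fun v => swap_apply_mem_iff ha hb, hrow.swap_comp h.1,
    hcol.swap_comp hanti h.2⟩, fun p hp => ?_⟩
  -- the entries `σ i`, `σ (i + 1)` are positive, so the swap fixes `0`
  show Equiv.swap _ _ (T p) = 0
  rw [hzero p hp]
  exact Equiv.swap_apply_of_ne_of_ne (by simp at ha; omega) (by simp at hb; omega)

lemma SameColumn.inDeg_lt (hanti : RowLengthsAntitone lam)
    (hT : IsStd σ n lam T) {i : ℕ} (h : SameColumn lam T (σ i) (σ (i + 1))) :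
    inDeg lam T (σ i) < inDeg lam T (σ (i + 1)) := by
  obtain ⟨r, r', c, hc, hc', ha, hb⟩ := h
  have hrr : r < r' := by
    rcases lt_trichotomy r r' with hlt | rfl | hgt
    · exact hlt
    · have := σ.injective (ha.symm.trans hb)
      omega
    · have := hT.2.2.lt_of_row_lt hanti hc'.1 hgt hc
      simp only [ha, hb, Equiv.symm_apply_apply] at this
      omega
  rw [← ha, ← hb, hT.1.inDeg_apply hc, hT.1.inDeg_apply hc']
  have := hc.1
  simp only
  omega

lemma inDeg_swapPartner (hT : IsFilling n lam T) {a b : ℕ} (h : ¬ SameColumn lam T a b) :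
    inDeg lam (swapPartner lam a b T) b = inDeg lam T a := by
  unfold swapPartner
  split_ifs with hadj
  · obtain ⟨r, c, c', hc, hc', ha, hb⟩ := hadj.resolve_right h
    rw [← ha, ← hb, hT.inDeg_apply hc, hT.inDeg_apply hc']
  · simpa using inDeg_perm_comp (T := T) (Equiv.swap a b) a

lemma inDeg_le_inDeg_swapPartner (hanti : RowLengthsAntitone lam)
    (hT : IsStd σ n lam T) (i : ℕ) :
    inDeg lam T (σ i) ≤ inDeg lam (swapPartner lam (σ i) (σ (i + 1)) T) (σ (i + 1)) := by
  by_cases hcol : SameColumn lam T (σ i) (σ (i + 1))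
  · rw [swapPartner_of_sameColumn hcol]
    exact (hcol.inDeg_lt hanti hT).le
  · rw [inDeg_swapPartner hT.1 hcol]

lemma inDeg_lt_inDeg_swapPartner_iff (hanti : RowLengthsAntitone lam)
    (hT : IsStd σ n lam T) (i : ℕ) :
    inDeg lam T (σ i) < inDeg lam (swapPartner lam (σ i) (σ (i + 1)) T) (σ (i + 1)) ↔
      SameColumn lam T (σ i) (σ (i + 1)) := by
  by_cases hcol : SameColumn lam T (σ i) (σ (i + 1))
  · rw [swapPartner_of_sameColumn hcol]
    exact iff_of_true (hcol.inDeg_lt hanti hT) hcol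
  · rw [inDeg_swapPartner hT.1 hcol]
    exact iff_of_false (lt_irrefl _) hcol

theorem dlam_lt_dlam_iff (hanti : RowLengthsAntitone lam) {i : ℕ}
    (ha : σ i ∈ Icc 1 n) (hb : σ (i + 1) ∈ Icc 1 n) :
    dlam n σ lam (σ i) < dlam n σ lam (σ (i + 1)) ↔
      ∃ T ∈ stdTableaux σ n lam, SameColumn lam T (σ i) (σ (i + 1)) := by
  set F := (stdTableaux_finite σ n lam).toFinset
  set φ := swapPartner lam (σ i) (σ (i + 1))
  have hφ : ∀ T ∈ F, φ T ∈ F := by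
    simpa only [F, Set.Finite.mem_toFinset] using fun T => swapPartner_mem_stdTableaux hanti ha hb
  have hφφ : ∀ T, φ (φ T) = T := swapPartner_swapPartner _ _
  have hsum : dlam n σ lam (σ (i + 1)) = ∑ T ∈ F, inDeg lam (φ T) (σ (i + 1)) :=
    (dlam_eq_sum _).trans <| sum_nbij' φ φ hφ hφ (fun T _ => hφφ T) (fun T _ => hφφ T)
      (fun T _ => by rw [hφφ])
  have hle : ∀ T ∈ F, inDeg lam T (σ i) ≤ inDeg lam (φ T) (σ (i + 1)) := fun T hT =>
    inDeg_le_inDeg_swapPartner hanti ((Set.Finite.mem_toFinset _).1 hT).1 i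
  rw [dlam_eq_sum, hsum, (sum_le_sum hle).lt_iff_ne, Ne, sum_eq_sum_iff_of_le hle]
  push Not
  refine exists_congr fun T => ?_
  have hF : T ∈ F ↔ T ∈ stdTableaux σ n lam := Set.Finite.mem_toFinset _
  rw [hF]
  exact and_congr_right fun hT => (hle T (hF.2 hT)).lt_iff_ne.symm.trans
    (inDeg_lt_inDeg_swapPartner_iff hanti hT.1 i)

lemma IsStd.congr_cells (hanti : RowLengthsAntitone lam)
    (hT : IsStd σ n lam T) (h : ∀ p, IsCell lam p → T' p = T p) : IsStd σ n lam T' := by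
  obtain ⟨⟨hval, hinj, hsurj⟩, hrow, hcol⟩ := hT
  refine ⟨⟨fun p hp => h p hp ▸ hval p hp,
    fun p q hp hq e => hinj p q hp hq (by rwa [h p hp, h q hq] at e), fun v hv => ?_⟩,
    fun r j hj hc => ?_, fun r j hr hc => ?_⟩
  · obtain ⟨p, hp, rfl⟩ := hsurj v hv
    exact ⟨p, hp, h p hp⟩
  · rw [h _ hc, h _ (hc.of_succ_col hj)]
    exact hrow r j hj hc
  · rw [h _ hc, h _ (hc.of_row_le hanti hr r.le_succ)]
    exact hcol r j hr hc

lemma SameColumn.congr_cells {a b : ℕ} (hT : SameColumn lam T a b)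
    (h : ∀ p, IsCell lam p → T' p = T p) : SameColumn lam T' a b :=
  let ⟨r, r', c, hc, hc', ha, hb⟩ := hT
  ⟨r, r', c, hc, hc', (h _ hc).trans ha, (h _ hc').trans hb⟩

lemma exists_mem_stdTableaux_sameColumn_iff (hanti : RowLengthsAntitone lam)
    {a b : ℕ} : (∃ T ∈ stdTableaux σ n lam, SameColumn lam T a b) ↔
      ∃ T, IsStd σ n lam T ∧ SameColumn lam T a b := by
  classical
  refine ⟨fun ⟨T, hT, h⟩ => ⟨T, hT.1, h⟩, fun ⟨T, hT, h⟩ => ?_⟩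
  have hres : ∀ p, IsCell lam p → (fun p => if IsCell lam p then T p else 0) p = T p :=
    fun p hp => if_pos hp
  exact ⟨_, ⟨hT.congr_cells hanti hres, fun p hp => if_neg hp⟩, h.congr_cells hres⟩

end Tableaux

theorem dlam_strict_iff_general (n : ℕ) (lam : ℕ → ℕ) (σ : Equiv.Perm ℕ)
    (hlam_anti : ∀ a b, 1 ≤ a → a ≤ b → lam b ≤ lam a)
    (hσ : ∀ v, v ∈ Finset.Icc 1 n ↔ σ v ∈ Finset.Icc 1 n) :
    ∀ i, 1 ≤ i → i < n →
      (dlam n σ lam (σ i) < dlam n σ lam (σ (i + 1)) ↔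
        ∃ T, IsStd σ n lam T ∧ ∃ r r' c, IsCell lam (r, c) ∧ IsCell lam (r', c) ∧
          T (r, c) = σ i ∧ T (r', c) = σ (i + 1)) := by
  intro i hi hin
  have ha : σ i ∈ Icc 1 n := (hσ i).1 (mem_Icc.2 ⟨hi, hin.le⟩)
  have hb : σ (i + 1) ∈ Icc 1 n := (hσ (i + 1)).1 (mem_Icc.2 ⟨by omega, hin⟩)
  exact (dlam_lt_dlam_iff hlam_anti ha hb).trans (exists_mem_stdTableaux_sameColumn_iff hlam_anti)

/-- `d_λ(σ(i)) < d_λ(σ(i+1))` iff some standard tableau of shape `λ`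
has `σ(i)` and `σ(i+1)` in the same column. -/
theorem dlam_strict_iff (n m : ℕ) (lam : ℕ → ℕ) (σ : Equiv.Perm ℕ)
    (hm : 1 ≤ m)
    (hlam_anti : ∀ a b, 1 ≤ a → a ≤ b → lam b ≤ lam a)
    (hlam_sum : ∑ i ∈ Finset.Icc 1 m, lam i = n)
    (hlam_pos : 0 < lam m)
    (hlam_zero : ∀ i, m < i → lam i = 0)
    (hσ : ∀ v, v ∈ Finset.Icc 1 n ↔ σ v ∈ Finset.Icc 1 n) :
    ∀ i, 1 ≤ i → i < n →
      (dlam n σ lam (σ i) < dlam n σ lam (σ (i + 1)) ↔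
        ∃ T, IsStd σ n lam T ∧ ∃ r r' c, IsCell lam (r, c) ∧ IsCell lam (r', c) ∧
          T (r, c) = σ i ∧ T (r', c) = σ (i + 1)) :=
  dlam_strict_iff_general n lam σ hlam_anti hσ
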